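/- arXiv:1701.02867 — 2 statements merged into one kernel-verified Lean document; each statement's English description precedes it below -/
import Mathlib

section
/- For ξ ∈ (0,1), define K(ξ) = ∫₁^∞ (√((x-1+2ξ)(x+1)) - x - ξ)/√(x²-1) dx. Then K(ξ) is a well-defined (finite) real number and dK/dξ = -log ξ. -/
/-!
Since `(x - 1 + 2ξ)(x + 1) = (x + ξ)² - (1 - ξ)²`, the integrand is nonpositive, and it has the
elementary primitive
`G(x) = √(x-1) (√(x-1+2ξ) - √(x+1)) + 2ξ (log (√(x-1) + √(x-1+2ξ)) - log (√(x-1) + √(x+1)))`,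
with `G(1) = ξ log ξ` and `G(x) → ξ - 1` as `x → ∞`. A monotone primitive with a finite limit makes
the integrand integrable on `(1, ∞)`, and `K(ξ) = ξ - 1 - ξ log ξ` for every `ξ > 0`; differentiate.
-/

open Real MeasureTheory Filter Set Topology

noncomputable def integrand (η x : ℝ) : ℝ :=
  (√((x - 1 + 2 * η) * (x + 1)) - x - η) / √(x ^ 2 - 1)

theorem integrand_nonpos {η x : ℝ} (hxη : 0 ≤ x + η) : integrand η x ≤ 0 := by
  refine div_nonpos_of_nonpos_of_nonneg ?_ (sqrt_nonneg _)
  have hsq : (x - 1 + 2 * η) * (x + 1) ≤ (x + η) ^ 2 := by nlinarith [sq_nonneg (η - 1)]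
  have := (sqrt_le_sqrt hsq).trans_eq (sqrt_sq hxη)
  linarith

section UnitSlope

variable {p q : ℝ → ℝ} {x : ℝ}

theorem hasDerivAt_sqrt_mul_sqrt (hp : HasDerivAt p 1 x) (hq : HasDerivAt q 1 x)
    (hp0 : 0 < p x) (hq0 : 0 < q x) :
    HasDerivAt (fun y => √(p y) * √(q y)) ((p x + q x) / (2 * (√(p x) * √(q x)))) x := by
  have := sqrt_pos.2 hp0
  have := sqrt_pos.2 hq0
  refine ((hp.sqrt hp0.ne').fun_mul (hq.sqrt hq0.ne')).congr_deriv ?_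
  field_simp
  rw [sq_sqrt hp0.le, sq_sqrt hq0.le, add_comm]

theorem hasDerivAt_log_sqrt_add_sqrt (hp : HasDerivAt p 1 x) (hq : HasDerivAt q 1 x)
    (hp0 : 0 < p x) (hq0 : 0 < q x) :
    HasDerivAt (fun y => log (√(p y) + √(q y))) (1 / (2 * (√(p x) * √(q x)))) x := by
  have := sqrt_pos.2 hp0
  have := sqrt_pos.2 hq0
  refine (((hp.sqrt hp0.ne').fun_add (hq.sqrt hq0.ne')).log (by positivity)).congr_deriv ?_
  field_simp
  ring

end UnitSlope

noncomputable def integrandPrimitive (η x : ℝ) : ℝ :=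
  √(x - 1) * √(x - 1 + 2 * η) - √(x - 1) * √(x + 1)
    + 2 * η * (log (√(x - 1) + √(x - 1 + 2 * η)) - log (√(x - 1) + √(x + 1)))

theorem hasDerivAt_integrandPrimitive {η x : ℝ} (hη : 0 ≤ η) (hx : 1 < x) :
    HasDerivAt (integrandPrimitive η) (integrand η x) x := by
  have hs : HasDerivAt (fun y : ℝ => y - 1) 1 x := (hasDerivAt_id x).sub_const 1
  have hu : HasDerivAt (fun y : ℝ => y - 1 + 2 * η) 1 x := hs.add_const _
  have ht : HasDerivAt (fun y : ℝ => y + 1) 1 x := (hasDerivAt_id x).add_const 1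
  have hs0 : 0 < x - 1 := by linarith
  have hu0 : 0 < x - 1 + 2 * η := by linarith
  have ht0 : 0 < x + 1 := by linarith
  refine (((hasDerivAt_sqrt_mul_sqrt hs hu hs0 hu0).fun_sub
    (hasDerivAt_sqrt_mul_sqrt hs ht hs0 ht0)).fun_add
    (((hasDerivAt_log_sqrt_add_sqrt hs hu hs0 hu0).fun_sub
      (hasDerivAt_log_sqrt_add_sqrt hs ht hs0 ht0)).const_mul (2 * η))).congr_deriv ?_
  rw [integrand.eq_def, show x ^ 2 - 1 = (x - 1) * (x + 1) by ring, sqrt_mul hs0.le, sqrt_mul hu0.le]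
  have := sqrt_pos.2 hs0
  have := sqrt_pos.2 hu0
  have := sqrt_pos.2 ht0
  field_simp
  linear_combination (-2 * √(x + 1)) * sq_sqrt hu0.le

theorem integrandPrimitive_one {η : ℝ} (hη : 0 < η) : integrandPrimitive η 1 = η * log η := by
  have hlog : log (√(2 * η)) - log √2 = log η / 2 := by
    rw [log_sqrt (by positivity), log_sqrt zero_le_two, log_mul two_ne_zero hη.ne']
    ring
  simp only [integrandPrimitive, sub_self, sqrt_zero, zero_mul, zero_add,
    show (1 : ℝ) + 1 = 2 by norm_num, hlog]
  ring

theorem continuousAt_integrandPrimitive_one {η : ℝ} (hη : 0 < η) :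
    ContinuousAt (integrandPrimitive η) 1 := by
  have hu : 0 < √(1 - 1 + 2 * η) := sqrt_pos.2 (by linarith)
  have ht : 0 < √(1 + 1 : ℝ) := sqrt_pos.2 (by norm_num)
  unfold integrandPrimitive
  refine ContinuousAt.add (by fun_prop) (continuousAt_const.mul (.sub (.log ?_ ?_) (.log ?_ ?_)))
  all_goals first | fun_prop | positivity

theorem tendsto_sqrt_add_div_sqrt (c : ℝ) :
    Tendsto (fun x => √(x + c) / √x) atTop (𝓝 1) := by
  have h : Tendsto (fun x => √(1 + c / x)) atTop (𝓝 (√(1 + 0))) :=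
    ((continuous_sqrt.tendsto _).comp
      (tendsto_const_nhds.add (tendsto_const_nhds.div_atTop tendsto_id)))
  rw [add_zero, sqrt_one] at h
  refine h.congr' ?_
  filter_upwards [eventually_gt_atTop 0] with x hx
  rw [← sqrt_div' _ hx.le, add_div, div_self hx.ne']

-- Both ratios `√(x - 1 + 2η) / √(x - 1)` and `√(x + 1) / √(x - 1)` tend to `1` at infinity.
theorem integrandPrimitive_eq {η x : ℝ} (hη : 0 ≤ η) (hx : 1 < x) :
    integrandPrimitive η x =
      (2 * η - 2) / (√(x - 1 + 2 * η) / √(x - 1) + √(x + 1) / √(x - 1))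
        + 2 * η * log ((1 + √(x - 1 + 2 * η) / √(x - 1)) / (1 + √(x + 1) / √(x - 1))) := by
  have hs0 : 0 < x - 1 := by linarith
  have hu0 : 0 < x - 1 + 2 * η := by linarith
  have ht0 : 0 < x + 1 := by linarith
  have hs := sqrt_pos.2 hs0
  have hu := sqrt_pos.2 hu0
  have ht := sqrt_pos.2 ht0
  have hlog : log ((1 + √(x - 1 + 2 * η) / √(x - 1)) / (1 + √(x + 1) / √(x - 1)))
      = log (√(x - 1) + √(x - 1 + 2 * η)) - log (√(x - 1) + √(x + 1)) := by
    rw [← log_div (by positivity) (by positivity)]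
    congr 1
    field_simp
  rw [hlog, integrandPrimitive]
  congr 1
  field_simp
  linear_combination sq_sqrt hu0.le - sq_sqrt ht0.le

theorem tendsto_integrandPrimitive {η : ℝ} (hη : 0 ≤ η) :
    Tendsto (integrandPrimitive η) atTop (𝓝 (η - 1)) := by
  have hshift : Tendsto (fun x : ℝ => x - 1) atTop atTop :=
    tendsto_atTop_add_const_right _ _ tendsto_id
  have hr₁ : Tendsto (fun x : ℝ => √(x - 1 + 2 * η) / √(x - 1)) atTop (𝓝 1) :=
    (tendsto_sqrt_add_div_sqrt (2 * η)).comp hshift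
  have hr₂ : Tendsto (fun x : ℝ => √(x + 1) / √(x - 1)) atTop (𝓝 1) :=
    ((tendsto_sqrt_add_div_sqrt 2).comp hshift).congr fun x => by
      simp only [Function.comp, show x - 1 + 2 = x + 1 by ring]
  rw [show η - 1 = (2 * η - 2) / (1 + 1) + 2 * η * log ((1 + 1) / (1 + 1)) by norm_num; ring]
  refine Tendsto.congr'
    ((eventually_gt_atTop 1).mono fun x hx => (integrandPrimitive_eq hη hx).symm) ?_
  exact (tendsto_const_nhds.div (hr₁.add hr₂) (by norm_num)).add (tendsto_const_nhds.mul
    (((tendsto_const_nhds.add hr₁).div (tendsto_const_nhds.add hr₂) (by norm_num)).log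
      (by norm_num)))

theorem integrableOn_integrand {η : ℝ} (hη : 0 < η) : IntegrableOn (integrand η) (Ioi 1) :=
  integrableOn_Ioi_deriv_of_nonpos (continuousAt_integrandPrimitive_one hη).continuousWithinAt
    (fun _ hx => hasDerivAt_integrandPrimitive hη.le hx)
    (fun x hx => integrand_nonpos (by linarith [mem_Ioi.1 hx]))
    (tendsto_integrandPrimitive hη.le)

theorem integral_integrand {η : ℝ} (hη : 0 < η) :
    ∫ x in Ioi 1, integrand η x = η - 1 - η * log η := by
  rw [integral_Ioi_of_hasDerivAt_of_nonpos
    (continuousAt_integrandPrimitive_one hη).continuousWithinAt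
    (fun _ hx => hasDerivAt_integrandPrimitive hη.le hx)
    (fun x hx => integrand_nonpos (by linarith [mem_Ioi.1 hx]))
    (tendsto_integrandPrimitive hη.le), integrandPrimitive_one hη]

/-- For `ξ ∈ (0,1)`, `K(ξ) = ∫₁^∞ (√((x-1+2ξ)(x+1)) - x - ξ)/√(x²-1) dx` is a well-defined
(finite) real number and `K'(ξ) = -log ξ`. -/
theorem stmt_2 (ξ : ℝ) (hξ : ξ ∈ Set.Ioo 0 1)
    (K : ℝ → ℝ)
    (hK : ∀ η, K η =
      ∫ x in Set.Ioi (1 : ℝ),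
        (Real.sqrt ((x - 1 + 2 * η) * (x + 1)) - x - η) / Real.sqrt (x ^ 2 - 1)) :
    IntegrableOn
        (fun x => (Real.sqrt ((x - 1 + 2 * ξ) * (x + 1)) - x - ξ) / Real.sqrt (x ^ 2 - 1))
        (Set.Ioi (1 : ℝ)) ∧
      HasDerivAt K (-Real.log ξ) ξ := by
  refine ⟨integrableOn_integrand hξ.1, ?_⟩
  have hK_eq : K =ᶠ[𝓝 ξ] fun η => η - 1 - η * log η := by
    filter_upwards [Ioi_mem_nhds hξ.1] with η hη
    rw [hK, ← integral_integrand hη]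
    rfl
  refine HasDerivAt.congr_of_eventuallyEq ?_ hK_eq
  exact (((hasDerivAt_id ξ).sub_const 1).fun_sub (hasDerivAt_mul_log hξ.1.ne')).congr_deriv
    (by ring)
end

section
/- With K(ξ) = ∫₁^∞ (√((x-1+2ξ)(x+1)) - x - ξ)/√(x²-1) dx and k(ξ) = 1 - 2ξ + ξ², for ξ ∈ (0,1) one has e^{-K'(ξ)} = ξ, i.e. K'(ξ) = -log ξ, and hence -(1/2)·d/dξ[k(ξ)] = 1 - ξ. -/
open Real Filter MeasureTheory Topology

lemma Fderiv (η : ℝ) (h0 : 0 < η) (x : ℝ) (hx : 1 < x) :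
    HasDerivAt (fun y : ℝ => Real.sqrt ((y-1)*(y-1+2*η)) - Real.sqrt (y^2-1)
        + 2*η*(Real.log (Real.sqrt (y-1) + Real.sqrt (y-1+2*η))
            - Real.log (Real.sqrt (y-1) + Real.sqrt (y+1))))
      ((Real.sqrt ((x - 1 + 2 * η) * (x + 1)) - x - η) / Real.sqrt (x ^ 2 - 1)) x := by
  have hx1 : (0:ℝ) < x - 1 := by linarith
  have hx2 : (0:ℝ) < x + 1 := by linarith
  have hx3 : (0:ℝ) < x - 1 + 2*η := by linarith
  set a := Real.sqrt (x-1) with ha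
  set b := Real.sqrt (x-1+2*η) with hb
  set c := Real.sqrt (x+1) with hc
  have hapos : 0 < a := Real.sqrt_pos.2 hx1
  have hbpos : 0 < b := Real.sqrt_pos.2 hx3
  have hcpos : 0 < c := Real.sqrt_pos.2 hx2
  have ha2 : a^2 = x - 1 := Real.sq_sqrt hx1.le
  have hb2 : b^2 = x - 1 + 2*η := Real.sq_sqrt hx3.le
  have hc2 : c^2 = x + 1 := Real.sq_sqrt hx2.le
  have hP : Real.sqrt ((x-1)*(x-1+2*η)) = a * b := Real.sqrt_mul hx1.le _
  have hQ : Real.sqrt (x^2-1) = a * c := by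
    rw [show x^2 - 1 = (x-1)*(x+1) by ring, Real.sqrt_mul hx1.le]
  have hR : Real.sqrt ((x - 1 + 2*η)*(x+1)) = b * c := Real.sqrt_mul hx3.le _
  -- pieces
  have d1 : HasDerivAt (fun y : ℝ => (y-1)*(y-1+2*η)) (2*x - 2 + 2*η) x := by
    have := (((hasDerivAt_id x).sub_const 1).mul (((hasDerivAt_id x).sub_const 1).add_const (2*η)))
    refine this.congr_deriv ?_; simp only [id_eq]; ring
  have s1 : HasDerivAt (fun y : ℝ => Real.sqrt ((y-1)*(y-1+2*η)))
      ((2*x - 2 + 2*η) / (2 * (a*b))) x := by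
    have := d1.sqrt (by positivity)
    rwa [hP] at this
  have d2 : HasDerivAt (fun y : ℝ => y^2 - 1) (2*x) x := by
    simpa using (hasDerivAt_pow 2 x).sub_const 1
  have s2 : HasDerivAt (fun y : ℝ => Real.sqrt (y^2-1)) ((2*x) / (2 * (a*c))) x := by
    have := d2.sqrt (by rw [show x^2-1 = (x-1)*(x+1) by ring]; positivity)
    rwa [hQ] at this
  have s3 : HasDerivAt (fun y : ℝ => Real.sqrt (y-1)) (1/(2*a)) x := by
    have := ((hasDerivAt_id x).sub_const 1).sqrt (by positivity)
    simpa using this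
  have s4 : HasDerivAt (fun y : ℝ => Real.sqrt (y-1+2*η)) (1/(2*b)) x := by
    have := (((hasDerivAt_id x).sub_const 1).add_const (2*η)).sqrt (by positivity)
    simpa using this
  have s5 : HasDerivAt (fun y : ℝ => Real.sqrt (y+1)) (1/(2*c)) x := by
    have := ((hasDerivAt_id x).add_const 1).sqrt (by positivity)
    simpa using this
  have l1 : HasDerivAt (fun y : ℝ => Real.log (Real.sqrt (y-1) + Real.sqrt (y-1+2*η)))
      ((1/(2*a) + 1/(2*b)) / (a + b)) x := (s3.add s4).log (add_pos hapos hbpos).ne'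
  have l2 : HasDerivAt (fun y : ℝ => Real.log (Real.sqrt (y-1) + Real.sqrt (y+1)))
      ((1/(2*a) + 1/(2*c)) / (a + c)) x := (s3.add s5).log (add_pos hapos hcpos).ne'
  have hsum := (s1.sub s2).add (((l1.sub l2).const_mul (2*η)))
  refine hsum.congr_deriv ?_; symm
  rw [hR, hQ]
  have e1 : (1/(2*a) + 1/(2*b)) / (a + b) = 1 / (2*(a*b)) := by
    field_simp; ring
  have e2 : (1/(2*a) + 1/(2*c)) / (a + c) = 1 / (2*(a*c)) := by
    field_simp; ring
  rw [e1, e2]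
  rw [div_eq_iff (by positivity : a*c ≠ 0)]
  field_simp
  nlinarith [ha2, hb2, hc2, sq_nonneg (a*b), sq_nonneg (a*c), mul_pos hapos hbpos, mul_pos hapos hcpos]

lemma integral_eval (η : ℝ) (h0 : 0 < η) (h1 : η < 1) :
    (∫ x in Set.Ioi (1:ℝ),
        (Real.sqrt ((x - 1 + 2 * η) * (x + 1)) - x - η) / Real.sqrt (x ^ 2 - 1))
      = η - η * Real.log η - 1 := by
  set F : ℝ → ℝ := fun y => Real.sqrt ((y-1)*(y-1+2*η)) - Real.sqrt (y^2-1)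
        + 2*η*(Real.log (Real.sqrt (y-1) + Real.sqrt (y-1+2*η))
            - Real.log (Real.sqrt (y-1) + Real.sqrt (y+1))) with hF
  -- continuity at 1
  have hcont : ContinuousWithinAt F (Set.Ici 1) 1 := by
    apply ContinuousAt.continuousWithinAt
    have cu : ContinuousAt (fun x:ℝ => Real.sqrt (x-1) + Real.sqrt (x-1+2*η)) 1 := by fun_prop
    have cv : ContinuousAt (fun x:ℝ => Real.sqrt (x-1) + Real.sqrt (x+1)) 1 := by fun_prop
    have hu : (fun x:ℝ => Real.sqrt (x-1) + Real.sqrt (x-1+2*η)) 1 ≠ 0 := by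
      simp only []
      norm_num
      positivity
    have hv : (fun x:ℝ => Real.sqrt (x-1) + Real.sqrt (x+1)) 1 ≠ 0 := by
      simp only []
      norm_num
    have : ContinuousAt (fun x:ℝ => Real.sqrt ((x-1)*(x-1+2*η)) - Real.sqrt (x^2-1)) 1 := by
      fun_prop
    exact this.add ((continuousAt_const.mul ((cu.log hu).sub (cv.log hv))))
  -- limit at infinity
  have hden : Tendsto (fun x:ℝ => x - 1) atTop atTop := by
    simpa [sub_eq_add_neg] using tendsto_atTop_add_const_right atTop (-1:ℝ) tendsto_id
  have s1 : Tendsto (fun x:ℝ => Real.sqrt (1 + 2*η/(x-1))) atTop (𝓝 1) := by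
    have h2 : Tendsto (fun x:ℝ => 1 + 2*η/(x-1)) atTop (𝓝 (1+0)) :=
      tendsto_const_nhds.add (Tendsto.div_atTop tendsto_const_nhds hden)
    rw [add_zero] at h2
    have := (Real.continuous_sqrt.tendsto 1).comp h2
    simpa [Function.comp_def] using this
  have s2 : Tendsto (fun x:ℝ => Real.sqrt (1 + 2/(x-1))) atTop (𝓝 1) := by
    have h2 : Tendsto (fun x:ℝ => 1 + 2/(x-1)) atTop (𝓝 (1+0)) :=
      tendsto_const_nhds.add (Tendsto.div_atTop tendsto_const_nhds hden)
    rw [add_zero] at h2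
    have := (Real.continuous_sqrt.tendsto 1).comp h2
    simpa [Function.comp_def] using this
  have part1 : Tendsto (fun x:ℝ => (2*η-2)/(Real.sqrt (1+2*η/(x-1)) + Real.sqrt (1+2/(x-1))))
      atTop (𝓝 (η - 1)) := by
    have h := Tendsto.div (tendsto_const_nhds (x := 2*η-2)) (s1.add s2)
      (by norm_num : (1:ℝ)+1 ≠ 0)
    have e : (2*η-2)/((1:ℝ)+1) = η - 1 := by ring
    rwa [e] at h
  have part2 : Tendsto (fun x:ℝ => 2*η * Real.log
      ((1+Real.sqrt (1+2*η/(x-1)))/(1+Real.sqrt (1+2/(x-1))))) atTop (𝓝 0) := by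
    have hr : Tendsto (fun x:ℝ => (1+Real.sqrt (1+2*η/(x-1)))/(1+Real.sqrt (1+2/(x-1))))
        atTop (𝓝 1) := by
      have h := Tendsto.div ((tendsto_const_nhds (x := (1:ℝ))).add s1)
        ((tendsto_const_nhds (x := (1:ℝ))).add s2) (by norm_num : (1:ℝ)+1 ≠ 0)
      have e : ((1:ℝ)+1)/(1+1) = 1 := by norm_num
      rwa [e] at h
    have := ((Real.continuousAt_log one_ne_zero).tendsto.comp hr).const_mul (2*η)
    simpa using this
  have htop : Tendsto F atTop (𝓝 (η - 1)) := by
    apply Tendsto.congr' _ (by simpa using part1.add part2)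
    filter_upwards [eventually_gt_atTop (1:ℝ)] with x hx
    have hx1 : (0:ℝ) < x - 1 := by linarith
    have hx2 : (0:ℝ) < x + 1 := by linarith
    have hx3 : (0:ℝ) < x - 1 + 2*η := by linarith
    set a := Real.sqrt (x-1)
    set b := Real.sqrt (x-1+2*η)
    set c := Real.sqrt (x+1)
    have hapos : 0 < a := Real.sqrt_pos.2 hx1
    have hbpos : 0 < b := Real.sqrt_pos.2 hx3
    have hcpos : 0 < c := Real.sqrt_pos.2 hx2
    have hb2 : b^2 = x - 1 + 2*η := Real.sq_sqrt hx3.le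
    have hc2 : c^2 = x + 1 := Real.sq_sqrt hx2.le
    have hP : Real.sqrt ((x-1)*(x-1+2*η)) = a * b := Real.sqrt_mul hx1.le _
    have hQ : Real.sqrt (x^2-1) = a * c := by
      rw [show x^2 - 1 = (x-1)*(x+1) by ring, Real.sqrt_mul hx1.le]
    have q1 : Real.sqrt (1+2*η/(x-1)) = b / a := by
      rw [show 1+2*η/(x-1) = (x-1+2*η)/(x-1) by field_simp, Real.sqrt_div hx3.le]
    have q2 : Real.sqrt (1+2/(x-1)) = c / a := by
      rw [show 1+2/(x-1) = (x+1)/(x-1) by field_simp; ring, Real.sqrt_div hx2.le]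
    rw [q1, q2]
    have e1 : (2*η-2)/(b/a + c/a) = a*b - a*c := by
      rw [← add_div, div_div_eq_mul_div, eq_comm,
        eq_div_iff (by positivity : b + c ≠ 0)]
      linear_combination a * hb2 - a * hc2
    have e2 : (1+b/a)/(1+c/a) = (a+b)/(a+c) := by
      rw [div_eq_div_iff (by positivity) (by positivity)]
      field_simp
    rw [e1, e2, Real.log_div (by positivity) (by positivity), hF]
    simp only [hP, hQ]
    rfl
  -- nonpositivity of the integrand
  have hnonpos : ∀ x ∈ Set.Ioi (1:ℝ),
      (Real.sqrt ((x - 1 + 2 * η) * (x + 1)) - x - η) / Real.sqrt (x ^ 2 - 1) ≤ 0 := by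
    intro x hx
    have hx' : (1:ℝ) < x := hx
    apply div_nonpos_of_nonpos_of_nonneg _ (Real.sqrt_nonneg _)
    have h1' : (x - 1 + 2*η)*(x+1) ≤ (x+η)^2 := by nlinarith [sq_nonneg (1-η)]
    have := Real.sqrt_le_sqrt h1'
    rw [Real.sqrt_sq (by linarith : (0:ℝ) ≤ x + η)] at this
    linarith
  -- derivative
  have hderiv : ∀ x ∈ Set.Ioi (1:ℝ), HasDerivAt F
      ((Real.sqrt ((x - 1 + 2 * η) * (x + 1)) - x - η) / Real.sqrt (x ^ 2 - 1)) x := by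
    intro x hx
    exact Fderiv η h0 x hx
  have key := integral_Ioi_of_hasDerivAt_of_nonpos hcont hderiv hnonpos htop
  rw [key]
  have hF1 : F 1 = η * Real.log η := by
    have e : F 1 = 2*η*(Real.log (Real.sqrt (2*η)) - Real.log (Real.sqrt 2)) := by
      rw [hF]; norm_num
    rw [e, Real.log_sqrt (by positivity), Real.log_sqrt (by norm_num),
      Real.log_mul two_ne_zero (ne_of_gt h0)]
    ring
  rw [hF1]; ring

/-- `K'(ξ) = -log ξ`, hence `e^{-K'(ξ)} = ξ`; and with `k(ξ) = 1 - 2ξ + ξ²`,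
`-k'(ξ)/2 = 1 - ξ`. -/
theorem stmt_17 (ξ : ℝ) (hξ : ξ ∈ Set.Ioo 0 1)
    (K k : ℝ → ℝ)
    (hK : ∀ η, K η =
      ∫ x in Set.Ioi (1 : ℝ),
        (Real.sqrt ((x - 1 + 2 * η) * (x + 1)) - x - η) / Real.sqrt (x ^ 2 - 1))
    (hk : ∀ η, k η = 1 - 2 * η + η ^ 2) :
    HasDerivAt K (-Real.log ξ) ξ ∧
      Real.exp (-(-Real.log ξ)) = ξ ∧
      -(deriv k ξ) / 2 = 1 - ξ := by
  obtain ⟨hξ0, hξ1⟩ := hξ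
  refine ⟨?_, ?_, ?_⟩
  · have heq : K =ᶠ[nhds ξ] fun η => η - η * Real.log η - 1 := by
      filter_upwards [IsOpen.mem_nhds isOpen_Ioo (Set.mem_Ioo.2 ⟨hξ0, hξ1⟩)] with η hη
      rw [hK η, integral_eval η hη.1 hη.2]
    have hg : HasDerivAt (fun η : ℝ => η - η * Real.log η - 1) (-Real.log ξ) ξ := by
      have h := ((hasDerivAt_id ξ).sub
        ((hasDerivAt_id ξ).mul (Real.hasDerivAt_log (ne_of_gt hξ0)))).sub_const 1
      refine h.congr_deriv ?_
      rw [id_eq, mul_inv_cancel₀ hξ0.ne']; ring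
    exact hg.congr_of_eventuallyEq heq
  · rw [neg_neg, Real.exp_log hξ0]
  · have hd : HasDerivAt k (-2 + 2 * ξ) ξ := by
      have h := ((hasDerivAt_const ξ (1:ℝ)).sub ((hasDerivAt_id ξ).const_mul 2)).add
        (hasDerivAt_pow 2 ξ)
      have hkf : k = fun η => 1 - 2 * η + η ^ 2 := funext hk
      rw [hkf]
      refine h.congr_deriv ?_
      push_cast
      norm_num [id]
    rw [hd.deriv]
    ring
end
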